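/- arXiv:2408.01359 — 2 statements merged into one kernel-verified Lean document; each statement's English description precedes it below -/
import Mathlib

section
/- Assume C has enough C-projectives and is covariantly finite in mod Λ. Then S(C) is covariantly finite in the monomorphism category S(mod Λ) of all injective morphisms between finite-dimensional Λ-modules: every injective Λ-linear map between finite-dimensional Λ-modules admits a left S(C)-approximation in the arrow category of mod Λ. -/
open CategoryTheory CategoryTheory.Limits

universe u

section Defs
variable {Λ : Type u} [Ring Λ]

/-- A short exact sequence `0 → X → Y → Z → 0` of Λ-modules. -/
def ShortExactSeq {X Y Z : ModuleCat.{u} Λ} (f : X ⟶ Y) (g : Y ⟶ Z) : Prop :=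
  Function.Injective f ∧ Function.Surjective g ∧ Function.Exact f g

variable (C : Set (ModuleCat.{u} Λ))

/-- An inflation of the exact category `C`: an injective map between objects of `C`
whose cokernel lies in `C`. -/
def IsInflation {X Y : ModuleCat.{u} Λ} (f : X ⟶ Y) : Prop :=
  X ∈ C ∧ Y ∈ C ∧ Function.Injective f ∧ ∃ Z ∈ C, ∃ g : Y ⟶ Z, ShortExactSeq f g

/-- A deflation of the exact category `C`: a surjective map between objects of `C`
whose kernel lies in `C`. -/
def IsDeflation {X Y : ModuleCat.{u} Λ} (f : X ⟶ Y) : Prop :=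
  X ∈ C ∧ Y ∈ C ∧ Function.Surjective f ∧ ∃ Z ∈ C, ∃ g : Z ⟶ X, ShortExactSeq g f

/-- The monomorphism category `S(C)`, as a subcategory of the arrow category. -/
def SMono : Set (Arrow (ModuleCat.{u} Λ)) := {a | IsInflation C a.hom}

/-- The epimorphism category `F(C)`, as a subcategory of the arrow category. -/
def FEpi : Set (Arrow (ModuleCat.{u} Λ)) := {a | IsDeflation C a.hom}

/-- `I` is a `C`-injective object. -/
def CInjective (I : ModuleCat.{u} Λ) : Prop :=
  I ∈ C ∧ ∀ (U V : ModuleCat.{u} Λ), U ∈ C → V ∈ C →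
    ∀ (f : I ⟶ U) (g : U ⟶ V), ShortExactSeq f g → ∃ r : U ⟶ I, f ≫ r = 𝟙 I

/-- `P` is a `C`-projective object. -/
def CProjective (P : ModuleCat.{u} Λ) : Prop :=
  P ∈ C ∧ ∀ (U V : ModuleCat.{u} Λ), U ∈ C → V ∈ C →
    ∀ (f : U ⟶ V) (g : V ⟶ P), ShortExactSeq f g → ∃ s : P ⟶ V, s ≫ g = 𝟙 P

/-- `C` has enough `C`-injectives. -/
def EnoughCInjectives : Prop :=
  ∀ X ∈ C, ∃ (I X' : ModuleCat.{u} Λ), CInjective C I ∧ X' ∈ C ∧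
    ∃ (e : X ⟶ I) (q : I ⟶ X'), ShortExactSeq e q

/-- `C` has enough `C`-projectives. -/
def EnoughCProjectives : Prop :=
  ∀ X ∈ C, ∃ (P X' : ModuleCat.{u} Λ), CProjective C P ∧ X' ∈ C ∧
    ∃ (q : X' ⟶ P) (p : P ⟶ X), ShortExactSeq q p

def ClosedUnderIso : Prop := ∀ (M N : ModuleCat.{u} Λ), (M ≅ N) → M ∈ C → N ∈ C
def ContainsZero : Prop := ∀ M : ModuleCat.{u} Λ, Subsingleton M → M ∈ C
def ClosedUnderSums : Prop := ∀ M N : ModuleCat.{u} Λ, M ∈ C → N ∈ C → (M ⊞ N) ∈ C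
def ClosedUnderExtensions : Prop :=
  ∀ (X Y Z : ModuleCat.{u} Λ) (f : X ⟶ Y) (g : Y ⟶ Z),
    X ∈ C → Z ∈ C → ShortExactSeq f g → Y ∈ C

end Defs

section Approx
variable {A : Type*} [Category A] (D : Set A)

/-- `g : Y ⟶ Z` is a right `D`-approximation of `Z`. -/
def IsRightApprox {Y Z : A} (g : Y ⟶ Z) : Prop :=
  Y ∈ D ∧ ∀ W ∈ D, ∀ u : W ⟶ Z, ∃ v : W ⟶ Y, v ≫ g = u

/-- `g : Z ⟶ Y` is a left `D`-approximation of `Z`. -/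
def IsLeftApprox {Z Y : A} (g : Z ⟶ Y) : Prop :=
  Y ∈ D ∧ ∀ W ∈ D, ∀ u : Z ⟶ W, ∃ v : Y ⟶ W, g ≫ v = u

end Approx

section Finiteness
variable {Λ : Type u} [Ring Λ]

/-- Contravariant finiteness of `C` in `mod Λ` (the finite-dimensional Λ-modules). -/
def ContravariantlyFinite (C : Set (ModuleCat.{u} Λ)) : Prop :=
  ∀ M : ModuleCat.{u} Λ, Module.Finite Λ M →
    ∃ (Y : ModuleCat.{u} Λ) (g : Y ⟶ M), IsRightApprox C g

/-- Covariant finiteness of `C` in `mod Λ`. -/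
def CovariantlyFinite (C : Set (ModuleCat.{u} Λ)) : Prop :=
  ∀ M : ModuleCat.{u} Λ, Module.Finite Λ M →
    ∃ (Y : ModuleCat.{u} Λ) (g : M ⟶ Y), IsLeftApprox C g

end Finiteness

/-!
Take a left `C`-approximation `b : Y → C_Y`, let `γ : C_Y → C_R` be `C_Y ↠ C_Y ⧸ im (b f)`
followed by a left `C`-approximation, and choose `0 → Ω → P →π C_R → 0` with `P` `C`-projective.
The inclusion of the pullback `C_Y ×_{C_R} P` into `C_Y × P` is an inflation of `C` with cokernel
`C_R`, and `y ↦ (b y, 0)` makes it a left `S(C)`-approximation of `f`. Given a square from `f` to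
an inflation `A ↣ B ↠ Z` of `C`, its right map factors as `t₁ ∘ b`; then `g ∘ t₁` kills `im (b f)`,
so equals `z ∘ γ`, and `z ∘ π` lifts along the deflation `g` to `t₂ : P → B` by
`C`-projectivity. The map `(y, p) ↦ t₁ y - t₂ p` then sends the pullback into `A`.
-/

section Pullback
variable {Λ : Type u} [Ring Λ] {M N Z : ModuleCat.{u} Λ} (h : M ⟶ Z) (g : N ⟶ Z)

def pullbackSubmodule : Submodule Λ (M × N) :=
  LinearMap.ker (h.hom ∘ₗ LinearMap.fst Λ M N - g.hom ∘ₗ LinearMap.snd Λ M N)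

theorem mem_pullbackSubmodule {x : M × N} : x ∈ pullbackSubmodule h g ↔ h x.1 = g x.2 := by
  simp [pullbackSubmodule, sub_eq_zero]

abbrev pullbackObj : ModuleCat.{u} Λ := ModuleCat.of Λ (pullbackSubmodule h g)

def pullbackFst : pullbackObj h g ⟶ M :=
  ModuleCat.ofHom (LinearMap.fst Λ M N ∘ₗ (pullbackSubmodule h g).subtype)

def pullbackSnd : pullbackObj h g ⟶ N :=
  ModuleCat.ofHom (LinearMap.snd Λ M N ∘ₗ (pullbackSubmodule h g).subtype)

def pullbackι : pullbackObj h g ⟶ ModuleCat.of Λ (M × N) :=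
  ModuleCat.ofHom (pullbackSubmodule h g).subtype

def pullbackLift {W : ModuleCat.{u} Λ} (a : W ⟶ M) (c : W ⟶ N) (w : a ≫ h = c ≫ g) :
    W ⟶ pullbackObj h g :=
  ModuleCat.ofHom (LinearMap.codRestrict _ (a.hom.prod c.hom)
    fun x => (mem_pullbackSubmodule h g).2 congr($w x))

def prodSub : ModuleCat.of Λ (M × N) ⟶ Z :=
  ModuleCat.ofHom (h.hom ∘ₗ LinearMap.fst Λ M N - g.hom ∘ₗ LinearMap.snd Λ M N)

theorem pullbackFst_comp : pullbackFst h g ≫ h = pullbackSnd h g ≫ g := by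
  ext x
  exact (mem_pullbackSubmodule h g).1 x.2

theorem pullbackι_prodSub : pullbackι h g ≫ prodSub h g = 0 := by
  ext x
  exact x.2

theorem shortExactSeq_pullbackι_prodSub (hg : Function.Surjective g) :
    ShortExactSeq (pullbackι h g) (prodSub h g) := by
  refine ⟨Subtype.val_injective, fun z => ?_, fun x => ?_⟩
  · obtain ⟨n, rfl⟩ := hg z
    exact ⟨(0, -n), by simp [prodSub]⟩
  · exact ⟨fun hx => ⟨⟨x, hx⟩, rfl⟩, by rintro ⟨x, rfl⟩; exact x.2⟩

theorem ShortExactSeq.exists_pullback {K : ModuleCat.{u} Λ} {q : K ⟶ N} (hqg : ShortExactSeq q g) :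
    ∃ i : K ⟶ pullbackObj h g, ShortExactSeq i (pullbackFst h g) := by
  obtain ⟨hq, hg, hexact⟩ := hqg
  have hmem (k : K) : ((0 : M), q k) ∈ pullbackSubmodule h g := by
    simp [mem_pullbackSubmodule, (hexact (q k)).2 ⟨k, rfl⟩]
  refine ⟨ModuleCat.ofHom (LinearMap.codRestrict _ (LinearMap.inr Λ M N ∘ₗ q.hom) hmem),
    fun k k' hkk' => hq congr($hkk'.1.2), fun m => ?_, ?_⟩
  · obtain ⟨n, hn⟩ := hg (h m)
    exact ⟨⟨(m, n), (mem_pullbackSubmodule h g).2 hn.symm⟩, rfl⟩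
  · rintro ⟨⟨m, n⟩, hmn⟩
    rw [mem_pullbackSubmodule] at hmn
    constructor
    · rintro (rfl : m = 0)
      obtain ⟨k, rfl⟩ := (hexact n).1 (by simpa using hmn.symm)
      exact ⟨k, rfl⟩
    · rintro ⟨k, hk⟩
      exact congr($hk.1.1).symm

end Pullback

section Lifting
variable {Λ : Type u} [Ring Λ]

theorem ShortExactSeq.comp_eq_zero {K N Z : ModuleCat.{u} Λ} {q : K ⟶ N} {g : N ⟶ Z}
    (hqg : ShortExactSeq q g) : q ≫ g = 0 := by
  ext x
  exact (hqg.2.2 _).2 ⟨x, rfl⟩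

theorem exists_comp_eq_of_exact {K N Z W : ModuleCat.{u} Λ} {q : K ⟶ N} {g : N ⟶ Z}
    (hq : Function.Injective q) (hqg : Function.Exact q g) (u : W ⟶ N) (hu : u ≫ g = 0) :
    ∃ v : W ⟶ K, v ≫ q = u := by
  have hrange (w : W) : u.hom w ∈ LinearMap.range q.hom := (hqg _).1 congr($hu w)
  refine ⟨ModuleCat.ofHom ((LinearEquiv.ofInjective q.hom hq).symm.toLinearMap ∘ₗ
    LinearMap.codRestrict _ u.hom hrange), ?_⟩
  ext w
  simp

theorem exists_comp_eq_of_isLeftApprox_mkQ {D : Set (ModuleCat.{u} Λ)} {X CY CR : ModuleCat.{u} Λ}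
    (a : X ⟶ CY) {c : ModuleCat.of Λ (CY ⧸ LinearMap.range a.hom) ⟶ CR} (hc : IsLeftApprox D c)
    {Z : ModuleCat.{u} Λ} (hZ : Z ∈ D) (u : CY ⟶ Z) (hu : a ≫ u = 0) :
    ∃ z : CR ⟶ Z, (ModuleCat.ofHom (LinearMap.range a.hom).mkQ ≫ c) ≫ z = u := by
  have hker : LinearMap.range a.hom ≤ LinearMap.ker u.hom := by
    rintro _ ⟨x, rfl⟩
    exact congr($hu x)
  obtain ⟨z, hz⟩ := hc.2 Z hZ (ModuleCat.ofHom ((LinearMap.range a.hom).liftQ u.hom hker))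
  refine ⟨z, ?_⟩
  rw [Category.assoc, hz]
  ext y
  rfl

end Lifting

section Approximation
variable {Λ : Type u} [Ring Λ] {C : Set (ModuleCat.{u} Λ)}

theorem ClosedUnderSums.prod_mem (hCsum : ClosedUnderSums C) (hCiso : ClosedUnderIso C)
    {M N : ModuleCat.{u} Λ} (hM : M ∈ C) (hN : N ∈ C) : ModuleCat.of Λ (M × N) ∈ C :=
  hCiso _ _ (ModuleCat.biprodIsoProd M N) (hCsum M N hM hN)

/-- The pullback of the deflation `g` along `h` is an extension of `P` by `K` in `C`, hence
split. -/
theorem CProjective.exists_lift (hCext : ClosedUnderExtensions C) {P K N Z : ModuleCat.{u} Λ}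
    (hP : CProjective C P) {q : K ⟶ N} {g : N ⟶ Z} (hqg : ShortExactSeq q g) (hK : K ∈ C)
    (h : P ⟶ Z) : ∃ t : P ⟶ N, t ≫ g = h := by
  obtain ⟨i, hi⟩ := hqg.exists_pullback h
  obtain ⟨s, hs⟩ := hP.2 _ _ hK (hCext _ _ _ i _ hK hP.1 hi) i _ hi
  refine ⟨s ≫ pullbackSnd h g, ?_⟩
  rw [Category.assoc, ← pullbackFst_comp, ← Category.assoc, hs, Category.id_comp]

theorem pullbackι_mem_sMono (hCext : ClosedUnderExtensions C) (hCiso : ClosedUnderIso C)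
    (hCsum : ClosedUnderSums C) {CY CR P Ω : ModuleCat.{u} Λ} (γ : CY ⟶ CR) {q : Ω ⟶ P}
    {π : P ⟶ CR} (hqπ : ShortExactSeq q π) (hCY : CY ∈ C) (hCR : CR ∈ C) (hP : P ∈ C)
    (hΩ : Ω ∈ C) : Arrow.mk (pullbackι γ π) ∈ SMono C := by
  obtain ⟨i, hi⟩ := hqπ.exists_pullback γ
  exact ⟨hCext _ _ _ i _ hΩ hCY hi, hCsum.prod_mem hCiso hCY hP, Subtype.val_injective,
    CR, hCR, prodSub γ π, shortExactSeq_pullbackι_prodSub γ π hqπ.2.1⟩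

def toPullbackι {X Y CY CR P : ModuleCat.{u} Λ} (f : X ⟶ Y) (b : Y ⟶ CY) (γ : CY ⟶ CR)
    (π : P ⟶ CR) (hfbγ : f ≫ b ≫ γ = 0) : Arrow.mk f ⟶ Arrow.mk (pullbackι γ π) :=
  Arrow.homMk' (pullbackLift γ π (f ≫ b) 0 (by simpa using hfbγ))
    (ModuleCat.ofHom (b.hom.prod 0)) (ModuleCat.hom_ext (LinearMap.ext fun _ => rfl))

theorem isLeftApprox_toPullbackι (hCext : ClosedUnderExtensions C)
    {X Y CY CR P : ModuleCat.{u} Λ} {f : X ⟶ Y} {b : Y ⟶ CY} (hb : IsLeftApprox C b)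
    {γ : CY ⟶ CR} (hγ : ∀ Z ∈ C, ∀ u : CY ⟶ Z, f ≫ b ≫ u = 0 → ∃ z : CR ⟶ Z, γ ≫ z = u)
    (hfbγ : f ≫ b ≫ γ = 0) (hP : CProjective C P) {π : P ⟶ CR}
    (hmem : Arrow.mk (pullbackι γ π) ∈ SMono C) :
    IsLeftApprox (SMono C) (toPullbackι f b γ π hfbγ) := by
  refine ⟨hmem, fun W hW φ => ?_⟩
  obtain ⟨hA, hB, hm, Z, hZ, g, hses⟩ := hW
  obtain ⟨t₁, ht₁⟩ := hb.2 _ hB φ.right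
  have hφ : φ.left ≫ W.hom = f ≫ φ.right := φ.w
  obtain ⟨z, hz⟩ := hγ Z hZ (t₁ ≫ g) (by
    rw [reassoc_of% ht₁, ← reassoc_of% hφ, hses.comp_eq_zero, comp_zero])
  obtain ⟨t₂, ht₂⟩ := hP.exists_lift hCext hses hA (π ≫ z)
  let t : ModuleCat.of Λ (CY × P) ⟶ W.right := ModuleCat.ofHom (t₁.hom.coprod (-t₂.hom))
  have ht : t ≫ g = prodSub γ π ≫ z := by
    refine ModuleCat.hom_ext (LinearMap.ext fun ⟨y, p⟩ => ?_)
    simpa [t, prodSub, sub_eq_add_neg] using congr($hz.symm y - $ht₂ p)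
  obtain ⟨s, hs⟩ := exists_comp_eq_of_exact hses.1 hses.2.2 (pullbackι γ π ≫ t) (by
    rw [Category.assoc, ht, reassoc_of% pullbackι_prodSub, zero_comp])
  have hbt : (toPullbackι f b γ π hfbγ).right ≫ t = φ.right := by
    ext y
    simpa [t, toPullbackι] using congr($ht₁ y)
  have : Mono W.hom := (ModuleCat.mono_iff_injective W.hom).2 hm
  refine ⟨Arrow.homMk s t hs, Arrow.hom_ext _ _ ?_ hbt⟩
  rw [← cancel_mono W.hom, Arrow.comp_left]
  change (_ ≫ s) ≫ W.hom = _
  rw [Category.assoc, hs, Arrow.w_mk_assoc, hbt, hφ]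

end Approximation

theorem smono_covariantly_finite_general
    (Λ : Type u) [Ring Λ]
    (C : Set (ModuleCat.{u} Λ))
    (hCfd : ∀ M ∈ C, Module.Finite Λ M)
    (hCiso : ClosedUnderIso C)
    (hCsum : ClosedUnderSums C) (hCext : ClosedUnderExtensions C)
    (hCproj : EnoughCProjectives C) (hCcov : CovariantlyFinite C) :
    ∀ (X Y : ModuleCat.{u} Λ), Module.Finite Λ X → Module.Finite Λ Y →
      ∀ f : X ⟶ Y, Function.Injective f →
        ∃ (b : Arrow (ModuleCat.{u} Λ)) (g : Arrow.mk f ⟶ b), IsLeftApprox (SMono C) g := by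
  intro X Y _ hY f _
  obtain ⟨CY, b, hb⟩ := hCcov Y hY
  have : Module.Finite Λ CY := hCfd CY hb.1
  let K := LinearMap.range (f ≫ b).hom
  obtain ⟨CR, c, hc⟩ := hCcov (ModuleCat.of Λ (CY ⧸ K)) inferInstance
  let γ := ModuleCat.ofHom K.mkQ ≫ c
  have hfbγ : f ≫ b ≫ γ = 0 := by
    have hK : (f ≫ b) ≫ ModuleCat.ofHom K.mkQ = 0 := by
      ext x
      exact (Submodule.Quotient.mk_eq_zero K).2 ⟨x, rfl⟩
    simp only [γ, ← Category.assoc, hK, zero_comp]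
  obtain ⟨P, Ω, hP, hΩ, q, π, hqπ⟩ := hCproj CR hc.1
  have hmem := pullbackι_mem_sMono hCext hCiso hCsum γ hqπ hb.1 hc.1 hP.1 hΩ
  refine ⟨_, _, isLeftApprox_toPullbackι hCext hb (fun Z hZ u hu => ?_) hfbγ hP hmem⟩
  exact exists_comp_eq_of_isLeftApprox_mkQ (f ≫ b) hc hZ u (by rwa [Category.assoc])

/-- If `C` has enough `C`-projectives and is covariantly finite in `mod Λ`,
then `S(C)` is covariantly finite in `S(mod Λ)`: every injective map between
finite-dimensional Λ-modules admits a left `S(C)`-approximation in the arrow category. -/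
theorem smono_covariantly_finite
    (k : Type u) [Field k] (Λ : Type u) [Ring Λ] [Algebra k Λ] [FiniteDimensional k Λ]
    (C : Set (ModuleCat.{u} Λ))
    (hCfd : ∀ M ∈ C, Module.Finite Λ M)
    (hC0 : ContainsZero C) (hCiso : ClosedUnderIso C)
    (hCsum : ClosedUnderSums C) (hCext : ClosedUnderExtensions C)
    (hCproj : EnoughCProjectives C) (hCcov : CovariantlyFinite C) :
    ∀ (X Y : ModuleCat.{u} Λ), Module.Finite Λ X → Module.Finite Λ Y →
      ∀ f : X ⟶ Y, Function.Injective f →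
        ∃ (b : Arrow (ModuleCat.{u} Λ)) (g : Arrow.mk f ⟶ b), IsLeftApprox (SMono C) g :=
  smono_covariantly_finite_general Λ C hCfd hCiso hCsum hCext hCproj hCcov
end

section
/- Let 0 → A → B → C → 0, with maps f : A → B and g : B → C, be an almost split conflation in C. Then the sequence 0 → (A → 0) → (g : B → C) → (𝟙_C : C → C) → 0 in the epimorphism category F(C), whose first map is the arrow morphism (f, 0) and whose second map is the arrow morphism (g, 𝟙_C), is an almost split conflation in F(C). -/
open CategoryTheory CategoryTheory.Limits

universe u

section ArrowAS
variable {Λ : Type u} [Ring Λ]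
variable (D : Set (Arrow (ModuleCat.{u} Λ)))

/-- A conflation of the full subcategory `D` of the arrow category. -/
def ArrowConflation {a b c : Arrow (ModuleCat.{u} Λ)} (φ : a ⟶ b) (ψ : b ⟶ c) : Prop :=
  a ∈ D ∧ b ∈ D ∧ c ∈ D ∧ ShortExactSeq φ.left ψ.left ∧ ShortExactSeq φ.right ψ.right

/-- `φ : a ⟶ b` is left almost split in `D`. -/
def ArrowLeftAlmostSplit {a b : Arrow (ModuleCat.{u} Λ)} (φ : a ⟶ b) : Prop :=
  (¬ ∃ r : b ⟶ a, φ ≫ r = 𝟙 a) ∧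
  ∀ b' ∈ D, ∀ u : a ⟶ b', (¬ ∃ r : b' ⟶ a, u ≫ r = 𝟙 a) → ∃ v : b ⟶ b', φ ≫ v = u

/-- `ψ : b ⟶ c` is right almost split in `D`. -/
def ArrowRightAlmostSplit {b c : Arrow (ModuleCat.{u} Λ)} (ψ : b ⟶ c) : Prop :=
  (¬ ∃ s : c ⟶ b, s ≫ ψ = 𝟙 c) ∧
  ∀ b' ∈ D, ∀ u : b' ⟶ c, (¬ ∃ s : c ⟶ b', s ≫ u = 𝟙 c) → ∃ v : b' ⟶ b, v ≫ ψ = u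

/-- An almost split conflation in `D`. -/
def ArrowAlmostSplitConflation {a b c : Arrow (ModuleCat.{u} Λ)} (φ : a ⟶ b) (ψ : b ⟶ c) :
    Prop :=
  ArrowConflation D φ ψ ∧ (¬ ∃ r : b ⟶ a, φ ≫ r = 𝟙 a) ∧
    ArrowLeftAlmostSplit D φ ∧ ArrowRightAlmostSplit D ψ

end ArrowAS

section ModAS
variable {Λ : Type u} [Ring Λ] (C : Set (ModuleCat.{u} Λ))

/-- `f : X ⟶ Y` is left almost split in `C`. -/
def ModLeftAlmostSplit {X Y : ModuleCat.{u} Λ} (f : X ⟶ Y) : Prop :=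
  (¬ ∃ r : Y ⟶ X, f ≫ r = 𝟙 X) ∧
  ∀ Y' ∈ C, ∀ u : X ⟶ Y', (¬ ∃ r : Y' ⟶ X, u ≫ r = 𝟙 X) → ∃ v : Y ⟶ Y', f ≫ v = u

/-- `g : Y ⟶ Z` is right almost split in `C`. -/
def ModRightAlmostSplit {Y Z : ModuleCat.{u} Λ} (g : Y ⟶ Z) : Prop :=
  (¬ ∃ s : Z ⟶ Y, s ≫ g = 𝟙 Z) ∧
  ∀ Y' ∈ C, ∀ u : Y' ⟶ Z, (¬ ∃ s : Z ⟶ Y', s ≫ u = 𝟙 Z) → ∃ v : Y' ⟶ Y, v ≫ g = u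

/-- An almost split conflation `0 → X → Y → Z → 0` in `C`. -/
def ModAlmostSplitSeq {X Y Z : ModuleCat.{u} Λ} (f : X ⟶ Y) (g : Y ⟶ Z) : Prop :=
  X ∈ C ∧ Y ∈ C ∧ Z ∈ C ∧ ShortExactSeq f g ∧ (¬ ∃ r : Y ⟶ X, f ≫ r = 𝟙 X) ∧
    ModLeftAlmostSplit C f ∧ ModRightAlmostSplit C g

end ModAS

/-!
Both maps of the new sequence are detected on left components: a retraction of `(f, 0)` or a
section of `(g, 𝟙)` in the arrow category restricts to one of `f` or `g`. Conversely, a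
morphism `u` out of `A → 0` (resp. into `𝟙_Z`) that is not split lifts to a non-split
morphism `u.left` in `C`, which factors through `f` (resp. `g`) by the almost split property.
For `(f, 0)` the right component of the factorisation is obtained by descending along the
cokernel `g` of `f`; for `(g, 𝟙)` it is simply `u.right`.
-/

section Arrows
variable {T : Type*} [Category T] {a b : Arrow T}

lemma Arrow.not_exists_retraction_of_left {φ : a ⟶ b}
    (h : ¬ ∃ r : b.left ⟶ a.left, φ.left ≫ r = 𝟙 a.left) : ¬ ∃ r : b ⟶ a, φ ≫ r = 𝟙 a :=
  fun ⟨r, hr⟩ => h ⟨r.left, by simpa using congr_arg Arrow.Hom.left hr⟩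

lemma Arrow.not_exists_section_of_left {ψ : a ⟶ b}
    (h : ¬ ∃ s : b.left ⟶ a.left, s ≫ ψ.left = 𝟙 b.left) : ¬ ∃ s : b ⟶ a, s ≫ ψ = 𝟙 b :=
  fun ⟨s, hs⟩ => h ⟨s.left, by simpa using congr_arg Arrow.Hom.left hs⟩

end Arrows

section ShortExact
variable {Λ : Type u} [Ring Λ] {A B Z : ModuleCat.{u} Λ}

lemma ModuleCat.isZero_punit : IsZero (ModuleCat.of Λ PUnit.{u+1}) :=
  @ModuleCat.isZero_of_subsingleton _ _ _ (inferInstanceAs (Subsingleton PUnit))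

lemma ShortExactSeq.comp_eq_zero_s15 {f : A ⟶ B} {g : B ⟶ Z} (h : ShortExactSeq f g) :
    f ≫ g = 0 := by
  ext x
  exact h.2.2.apply_apply_eq_zero x

lemma ShortExactSeq.exists_desc {f : A ⟶ B} {g : B ⟶ Z} (h : ShortExactSeq f g)
    {W : ModuleCat.{u} Λ} (k : B ⟶ W) (hk : f ≫ k = 0) : ∃ l : Z ⟶ W, g ≫ l = k := by
  have hS : (ShortComplex.mk f g h.comp_eq_zero_s15).Exact :=
    (ShortComplex.moduleCat_exact_iff _).2 fun y hy => (h.2.2 y).1 hy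
  have : Epi g := (ModuleCat.epi_iff_surjective g).2 h.2.1
  exact hS.desc' k hk

lemma ShortExactSeq.isDeflation {C : Set (ModuleCat.{u} Λ)} {f : A ⟶ B} {g : B ⟶ Z}
    (h : ShortExactSeq f g) (hA : A ∈ C) (hB : B ∈ C) (hZ : Z ∈ C) : IsDeflation C g :=
  ⟨hB, hZ, h.2.1, A, hA, f, h⟩

lemma shortExactSeq_id_zero (A : ModuleCat.{u} Λ) :
    ShortExactSeq (𝟙 A) (0 : A ⟶ ModuleCat.of Λ PUnit.{u+1}) :=
  ⟨Function.injective_id, fun _ => ⟨0, rfl⟩, fun x => ⟨fun _ => ⟨x, rfl⟩, fun _ => rfl⟩⟩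

lemma shortExactSeq_zero_id (Z : ModuleCat.{u} Λ) :
    ShortExactSeq (0 : ModuleCat.of Λ PUnit.{u+1} ⟶ Z) (𝟙 Z) :=
  ⟨fun _ _ _ => rfl, Function.surjective_id,
    fun z => ⟨fun hz => ⟨0, by simpa using hz.symm⟩, fun ⟨_, hx⟩ => by simp [← hx]⟩⟩

end ShortExact

section FEpi
variable {Λ : Type u} [Ring Λ] {C : Set (ModuleCat.{u} Λ)} {A B Z : ModuleCat.{u} Λ}
  {f : A ⟶ B} {g : B ⟶ Z}

lemma arrowConflation_homMk_zero_homMk_id (hC0 : ContainsZero C) (hA : A ∈ C) (hB : B ∈ C)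
    (hZ : Z ∈ C) (h : ShortExactSeq f g) (w₁ w₂) :
    ArrowConflation (FEpi C)
      (Arrow.homMk (f := Arrow.mk (0 : A ⟶ ModuleCat.of Λ PUnit.{u+1})) (g := Arrow.mk g)
        f 0 w₁)
      (Arrow.homMk (f := Arrow.mk g) (g := Arrow.mk (𝟙 Z)) g (𝟙 Z) w₂) := by
  have hP : ModuleCat.of Λ PUnit.{u+1} ∈ C := hC0 _ (inferInstanceAs (Subsingleton PUnit))
  exact ⟨(shortExactSeq_id_zero A).isDeflation hA hA hP, h.isDeflation hA hB hZ,
    (shortExactSeq_zero_id Z).isDeflation hP hZ hZ, h, shortExactSeq_zero_id Z⟩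

lemma arrowLeftAlmostSplit_homMk_zero (h : ShortExactSeq f g) (hf : ModLeftAlmostSplit C f)
    (w) :
    ArrowLeftAlmostSplit (FEpi C)
      (Arrow.homMk (f := Arrow.mk (0 : A ⟶ ModuleCat.of Λ PUnit.{u+1})) (g := Arrow.mk g)
        f 0 w) := by
  refine ⟨Arrow.not_exists_retraction_of_left hf.1, fun b hb u hu => ?_⟩
  have hu_left : ¬ ∃ r : b.left ⟶ A, u.left ≫ r = 𝟙 A := fun ⟨r, hr⟩ =>
    hu ⟨Arrow.homMk r 0 (ModuleCat.isZero_punit.eq_of_tgt _ _),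
      Arrow.hom_ext _ _ (by simpa using hr) (ModuleCat.isZero_punit.eq_of_src _ _)⟩
  obtain ⟨v₁, hv₁⟩ := hf.2 b.left hb.1 u.left hu_left
  have hk : f ≫ v₁ ≫ b.hom = 0 := by
    rw [reassoc_of% hv₁, Arrow.w u]
    exact zero_comp
  obtain ⟨v₂, hv₂⟩ := h.exists_desc _ hk
  exact ⟨Arrow.homMk v₁ v₂ hv₂.symm,
    Arrow.hom_ext _ _ (by simpa using hv₁) (ModuleCat.isZero_punit.eq_of_src _ _)⟩

lemma arrowRightAlmostSplit_homMk_id (hg : ModRightAlmostSplit C g) (w) :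
    ArrowRightAlmostSplit (FEpi C)
      (Arrow.homMk (f := Arrow.mk g) (g := Arrow.mk (𝟙 Z)) g (𝟙 Z) w) := by
  refine ⟨Arrow.not_exists_section_of_left hg.1, fun b hb u hu => ?_⟩
  have hu_w : u.left = b.hom ≫ u.right := by simpa using Arrow.w u
  have hu_left : ¬ ∃ t : Z ⟶ b.left, t ≫ u.left = 𝟙 Z := fun ⟨t, ht⟩ =>
    hu ⟨Arrow.homMk t (t ≫ b.hom) (by simp),
      Arrow.hom_ext _ _ (by simpa using ht) (by simpa [hu_w] using ht)⟩
  obtain ⟨v, hv⟩ := hg.2 b.left hb.1 u.left hu_left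
  exact ⟨Arrow.homMk v u.right (by simpa [hv] using hu_w),
    Arrow.hom_ext _ _ (by simpa using hv) (by simp)⟩

end FEpi

/-- **Statement 16.** If `0 → A →f B →g Z → 0` is an almost split conflation in `C`, then
`0 → (A → 0) → (g : B → Z) → (𝟙_Z) → 0` is an almost split conflation in `F(C)`. -/
theorem almost_split_fepi_ending_at_identity
    (Λ : Type u) [Ring Λ]
    (C : Set (ModuleCat.{u} Λ))
    (hC0 : ContainsZero C)
    {A B Z : ModuleCat.{u} Λ} (f : A ⟶ B) (g : B ⟶ Z)
    (h : ModAlmostSplitSeq C f g) :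
    ArrowAlmostSplitConflation (FEpi C)
      (a := Arrow.mk (0 : A ⟶ ModuleCat.of Λ PUnit.{u+1}))
      (b := Arrow.mk g) (c := Arrow.mk (𝟙 Z))
      (Arrow.homMk (u := f) (v := 0)
        (by
          have hex : Function.Exact f g := h.2.2.2.1.2.2
          have hfg : f ≫ g = 0 := by
            ext x
            simpa using hex.apply_apply_eq_zero x
          simp [hfg]))
      (Arrow.homMk (u := g) (v := 𝟙 Z) (by simp)) := by
  obtain ⟨hA, hB, hZ, hses, hns, hf, hg⟩ := h
  exact ⟨arrowConflation_homMk_zero_homMk_id hC0 hA hB hZ hses _ _,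
    Arrow.not_exists_retraction_of_left hns, arrowLeftAlmostSplit_homMk_zero hses hf _,
    arrowRightAlmostSplit_homMk_id hg _⟩
end
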